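/- arXiv:2402.10181 — 4 statements merged into one kernel-verified Lean document; each statement's English description precedes it below -/
import Mathlib

section
/- For any linear operator O on a finite-dimensional Hilbert space and any permutation ρ ∈ S_k, the trace of O^{⊗k} composed with the permutation operator T_ρ (which permutes the k tensor factors) equals the product over the disjoint cycles α of ρ of Tr[O^{|α|}], where |α| is the length of the cycle. -/
open Matrix BigOperators
open scoped Classical

/-- Tensor power of a matrix: `O^{⊗k}` acting on `ι^k`. -/
noncomputable def tensorPow {ι : Type} [Fintype ι] (O : Matrix ι ι ℂ) (k : ℕ) :
    Matrix (Fin k → ι) (Fin k → ι) ℂ :=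
  fun x y => ∏ i, O (x i) (y i)

/-- Permutation operator `T_ρ` on `H^{⊗k}`: `T_ρ (v_1 ⊗ ⋯ ⊗ v_k) = v_{ρ⁻¹(1)} ⊗ ⋯`. -/
noncomputable def permOp (ι : Type) [Fintype ι] {k : ℕ} (ρ : Equiv.Perm (Fin k)) :
    Matrix (Fin k → ι) (Fin k → ι) ℂ :=
  fun x y => if x = y ∘ ρ.symm then 1 else 0

/-- Unnormalized projector onto symmetric subspace. -/
noncomputable def symProj (ι : Type) [Fintype ι] (k : ℕ) :
    Matrix (Fin k → ι) (Fin k → ι) ℂ :=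
  ∑ ρ : Equiv.Perm (Fin k), permOp ι ρ

/-- Single-qubit Pauli matrices I, X, Y, Z. -/
noncomputable def pauli : Fin 4 → Matrix (Fin 2) (Fin 2) ℂ
  | 0 => 1
  | 1 => !![0, 1; 1, 0]
  | 2 => !![0, -Complex.I; Complex.I, 0]
  | 3 => !![1, 0; 0, -1]

/-- Pauli string `P_{s 0} ⊗ ⋯ ⊗ P_{s (n-1)}` on `n` qubits. -/
noncomputable def pauliString {n : ℕ} (s : Fin n → Fin 4) :
    Matrix (Fin n → Fin 2) (Fin n → Fin 2) ℂ :=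
  fun x y => ∏ i, pauli (s i) (x i) (y i)

/-- `Q = (1/d²) Σ_P P^{⊗4}` on `(ℂ^d)^{⊗4}`, `d = 2^n`. -/
noncomputable def Qop (n : ℕ) :
    Matrix (Fin 4 → (Fin n → Fin 2)) (Fin 4 → (Fin n → Fin 2)) ℂ :=
  (((2 : ℂ) ^ n) ^ 2)⁻¹ • ∑ s : Fin n → Fin 4, tensorPow (pauliString s) 4

/-!
Writing out the trace in coordinates, `Tr[O^{⊗k} T_ρ] = ∑_x ∏_i O_{x_i, x_{ρ⁻¹ i}}`. For a
permutation `σ` of a finite set, the sum `∑_x ∏_i O_{x_i, x_{σ i}}` factorises along any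
`σ`-invariant splitting of the set, so it is multiplicative over the cycles of `σ`. On a single
cycle of length `n` it is the sum over closed paths `x₀ → x₁ → ⋯ → x₀` of length `n` of the
products of the entries of `O`, i.e. `Tr[O^n]`; a fixed point contributes `Tr[O]`.
-/

open Finset

namespace Equiv.Perm

variable {α β : Type*} [Fintype α] [DecidableEq α] [Fintype β] [DecidableEq β]

theorem cycleType_permCongr (e : α ≃ β) (σ : Perm α) :
    (e.permCongr σ).cycleType = σ.cycleType := by
  have : e.permCongr σ = σ.extendDomain (e.trans (subtypeUnivEquiv fun _ => trivial).symm) := by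
    ext x
    simp [extendDomain_apply_subtype]
  rw [this, cycleType_extendDomain]

theorem prod_cycleFactorsFinset_eq_prod_cycleType {M : Type*} [CommMonoid M] (σ : Perm α)
    (f : ℕ → M) :
    ∏ c ∈ σ.cycleFactorsFinset, f #c.support = (σ.cycleType.map f).prod := by
  rw [cycleType_def, Multiset.map_map]
  rfl

section Invariant

variable {p : α → Prop} [DecidablePred p] (σ : Perm α) (hp : ∀ x, p (σ x) ↔ p x)

theorem cycleType_eq_add_subtypePerm :
    σ.cycleType = (σ.subtypePerm hp).cycleType +
      (σ.subtypePerm (p := (¬p ·)) fun x => (hp x).not).cycleType := by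
  have hdisj : Disjoint (ofSubtype (σ.subtypePerm hp))
      (ofSubtype (σ.subtypePerm (p := (¬p ·)) fun x => (hp x).not)) := fun x => by
    by_cases hx : p x
    · exact .inr (ofSubtype_apply_of_not_mem _ (not_not.mpr hx))
    · exact .inl (ofSubtype_apply_of_not_mem _ hx)
  have hσ : σ = ofSubtype (σ.subtypePerm hp) *
      ofSubtype (σ.subtypePerm (p := (¬p ·)) fun x => (hp x).not) := by
    ext x
    by_cases hx : p x <;> simp [ofSubtype_apply_of_mem, ofSubtype_apply_of_not_mem, hx, hp]
  conv_lhs => rw [hσ]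
  rw [hdisj.cycleType_mul, cycleType_ofSubtype, cycleType_ofSubtype]

theorem partition_parts_eq_add_subtypePerm :
    σ.partition.parts = (σ.subtypePerm hp).partition.parts +
      (σ.subtypePerm (p := (¬p ·)) fun x => (hp x).not).partition.parts := by
  have hsupp := congrArg Multiset.sum (cycleType_eq_add_subtypePerm σ hp)
  rw [Multiset.sum_add, sum_cycleType, sum_cycleType, sum_cycleType] at hsupp
  have hcard := Fintype.card_subtype_compl p
  have hle := card_le_univ (σ.subtypePerm hp).support
  have hle' := card_le_univ (σ.subtypePerm (p := (¬p ·)) fun x => (hp x).not).support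
  have hp_le : Fintype.card {x // p x} ≤ Fintype.card α := Fintype.card_subtype_le p
  simp only [parts_partition, cycleType_eq_add_subtypePerm σ hp]
  rw [add_add_add_comm, ← Multiset.replicate_add]
  congr 2
  omega

end Invariant

theorem partition_parts_of_cycleType_eq_singleton {σ : Perm α}
    (h : σ.cycleType = {Fintype.card α}) : σ.partition.parts = {Fintype.card α} := by
  have hsupp := sum_cycleType σ
  rw [h, Multiset.sum_singleton] at hsupp
  rw [parts_partition, h, ← hsupp, Nat.sub_self, Multiset.replicate_zero, add_zero]

/- The support of `c` is written as `{x // c x ≠ x}` rather than `c.support`: the coercion of a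
finset carries its own `Fintype` instance, which is not the one that `subtypePerm` produces. -/
theorem cycleType_subtypePerm_of_mem_cycleFactorsFinset {σ c : Perm α}
    (hc : c ∈ σ.cycleFactorsFinset) (hp : ∀ x, c (σ x) ≠ σ x ↔ c x ≠ x) :
    (σ.subtypePerm (p := fun x => c x ≠ x) hp).cycleType = {Fintype.card {x // c x ≠ x}} := by
  have hc' : ofSubtype (σ.subtypePerm (p := fun x => c x ≠ x) hp) = c := by
    ext x
    by_cases hx : c x = x
    · rw [ofSubtype_apply_of_not_mem (σ.subtypePerm hp) (not_not.mpr hx), hx]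
    · rw [ofSubtype_apply_of_mem (σ.subtypePerm hp) hx]
      exact ((mem_cycleFactorsFinset_iff.mp hc).2 x (mem_support.mpr hx)).symm
  rw [← cycleType_ofSubtype, hc', (mem_cycleFactorsFinset_iff.mp hc).1.cycleType,
    Fintype.card_subtype]
  rfl

end Equiv.Perm

namespace Matrix

open Equiv

variable {ι R : Type*} [Fintype ι] [CommSemiring R]

/-- For `σ` a permutation of `Fin k`, this is `Tr[O^{⊗k} T_{σ⁻¹}]` in coordinates. -/
def permTrace (O : Matrix ι ι R) {α : Type*} [Fintype α] [DecidableEq α] (σ : Perm α) : R :=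
  ∑ x : α → ι, ∏ i, O (x i) (x (σ i))

variable (O : Matrix ι ι R) {α β : Type*} [Fintype α] [DecidableEq α] [Fintype β]
  [DecidableEq β]

theorem permTrace_permCongr (e : α ≃ β) (σ : Perm α) :
    O.permTrace (e.permCongr σ) = O.permTrace σ := by
  refine (Fintype.sum_equiv (e.arrowCongr (Equiv.refl ι)) _ _ fun x => ?_).symm
  exact Fintype.prod_equiv e _ _ fun i => by simp

theorem permTrace_conj (g σ : Perm α) : O.permTrace (g * σ * g⁻¹) = O.permTrace σ :=
  permTrace_permCongr O g σ

theorem permTrace_sumCongr (σ : Perm α) (τ : Perm β) :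
    O.permTrace (σ.sumCongr τ) = O.permTrace σ * O.permTrace τ := by
  rw [permTrace, permTrace, permTrace, Finset.sum_mul_sum, ← Fintype.sum_prod_type']
  apply Fintype.sum_equiv (sumArrowEquivProdArrow α β ι)
  simp [Fintype.prod_sum_type]

theorem permTrace_eq_mul_subtypePerm {p : α → Prop} [DecidablePred p] (σ : Perm α)
    (hp : ∀ x, p (σ x) ↔ p x) :
    O.permTrace σ = O.permTrace (σ.subtypePerm hp) *
      O.permTrace (σ.subtypePerm (p := (¬p ·)) fun x => (hp x).not) := by
  have hσ : σ = (σ.subtypePerm hp).subtypeCongr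
      (σ.subtypePerm (p := (¬p ·)) fun x => (hp x).not) := by
    ext x
    by_cases hx : p x <;> simp [Perm.subtypeCongr.left_apply, Perm.subtypeCongr.right_apply, hx]
  rw [← permTrace_sumCongr, ← permTrace_permCongr O (sumCompl p), ← Perm.subtypeCongr,
    ← hσ]

theorem permTrace_one : O.permTrace (1 : Perm α) = O.trace ^ Fintype.card α := by
  rw [permTrace, trace, ← Finset.card_univ, ← Finset.prod_const, Fintype.prod_sum]
  rfl

theorem pow_succ_apply_eq_sum_prod [DecidableEq ι] (n : ℕ) (a b : ι) :
    (O ^ (n + 1)) a b = ∑ x : Fin n → ι,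
      ∏ j, O ((Fin.cons a x : Fin (n + 1) → ι) j) ((Fin.snoc x b : Fin (n + 1) → ι) j) := by
  induction n generalizing a with
  | zero => simp [Fin.snoc]
  | succ n ih =>
    rw [pow_succ', mul_apply, ← (Fin.consEquiv fun _ => ι).sum_comp, Fintype.sum_prod_type]
    refine Finset.sum_congr rfl fun c _ => ?_
    rw [ih, Finset.mul_sum]
    refine Finset.sum_congr rfl fun x _ => ?_
    rw [Fin.prod_univ_succ (n := n + 1)]
    simp [Fin.consEquiv, ← Fin.cons_snoc_eq_snoc_cons]

theorem permTrace_finRotate [DecidableEq ι] (n : ℕ) :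
    O.permTrace (finRotate (n + 1)) = (O ^ (n + 1)).trace := by
  simp only [trace, diag, pow_succ_apply_eq_sum_prod, Fin.snoc_eq_cons_rotate]
  rw [← Fintype.sum_prod_type', permTrace]
  apply Fintype.sum_equiv (Fin.consEquiv fun _ => ι).symm
  simp

theorem permTrace_of_cycleType_eq_singleton [DecidableEq ι] {σ : Perm α}
    (h : σ.cycleType = {Fintype.card α}) : O.permTrace σ = (O ^ Fintype.card α).trace := by
  have htwo : 2 ≤ Fintype.card α :=
    Perm.two_le_of_mem_cycleType (h ▸ Multiset.mem_singleton_self _)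
  obtain ⟨n, hn⟩ := Nat.exists_eq_add_of_le' htwo
  have hconj : IsConj ((Fintype.equivFin α).permCongr σ) (finRotate (Fintype.card α)) := by
    rw [Perm.isConj_iff_cycleType_eq, Perm.cycleType_permCongr, h,
      cycleType_finRotate_of_le (by omega)]
  obtain ⟨g, hg⟩ := isConj_iff.mp hconj
  rw [← permTrace_permCongr O (Fintype.equivFin α), ← permTrace_conj O g, hg, hn,
    permTrace_finRotate]

theorem permTrace_eq_prod_partition [DecidableEq ι] (σ : Perm α) :
    O.permTrace σ = (σ.partition.parts.map fun n => (O ^ n).trace).prod := by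
  obtain ⟨N, hcard⟩ : ∃ N, Fintype.card α = N := ⟨_, rfl⟩
  induction N using Nat.strong_induction_on generalizing α with
  | _ N ih =>
    rcases eq_or_ne σ 1 with rfl | hσ
    · simp [permTrace_one, Perm.parts_partition]
    obtain ⟨c, hc⟩ :=
      Finset.nonempty_iff_ne_empty.mpr (mt Perm.cycleFactorsFinset_eq_empty_iff.mp hσ)
    have hp : ∀ x, c (σ x) ≠ σ x ↔ c x ≠ x := by
      simpa only [Perm.mem_support] using Perm.mem_cycleFactorsFinset_support hc
    have hcycle := Perm.cycleType_subtypePerm_of_mem_cycleFactorsFinset hc hp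
    obtain ⟨x, hx⟩ := (Perm.mem_cycleFactorsFinset_iff.mp hc).1.nonempty_support
    have hsmaller : Fintype.card {x // ¬c x ≠ x} < N :=
      hcard ▸ Fintype.card_subtype_lt (not_not.mpr (Perm.mem_support.mp hx))
    rw [permTrace_eq_mul_subtypePerm O σ (p := fun x => c x ≠ x) hp,
      Perm.partition_parts_eq_add_subtypePerm σ (p := fun x => c x ≠ x) hp,
      Multiset.map_add, Multiset.prod_add, permTrace_of_cycleType_eq_singleton O hcycle,
      Perm.partition_parts_of_cycleType_eq_singleton hcycle, ih _ hsmaller _ rfl]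
    simp

end Matrix

theorem trace_tensorPow_mul_permOp {ι : Type} [Fintype ι] (k : ℕ) (O : Matrix ι ι ℂ)
    (ρ : Equiv.Perm (Fin k)) : (tensorPow O k * permOp ι ρ).trace = O.permTrace ρ⁻¹ := by
  refine Finset.sum_congr rfl fun x _ => ?_
  simp [mul_apply, tensorPow, permOp]

/-- `Tr[O^{⊗k} T_ρ] = ∏_{cycles α of ρ} Tr[O^{|α|}]`, where fixed
points of `ρ` count as 1-cycles each contributing `Tr[O]`. -/
theorem trace_tensorPow_permOp {ι : Type} [Fintype ι] (k : ℕ)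
    (O : Matrix ι ι ℂ) (ρ : Equiv.Perm (Fin k)) :
    (tensorPow O k * permOp ι ρ).trace =
      (∏ c ∈ ρ.cycleFactorsFinset, (O ^ c.support.card).trace) *
        O.trace ^ (k - ρ.support.card) := by
  rw [trace_tensorPow_mul_permOp, O.permTrace_eq_prod_partition, Equiv.Perm.parts_partition,
    Equiv.Perm.cycleType_inv, Equiv.Perm.support_inv, Multiset.map_add, Multiset.prod_add,
    Equiv.Perm.prod_cycleFactorsFinset_eq_prod_cycleType ρ fun n => (O ^ n).trace,
    Multiset.map_replicate, Multiset.prod_replicate, pow_one, Fintype.card_fin]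
end

section
/- With Q = (1/d²) Σ_{P ∈ 𝒫_n} P^{⊗4} where 𝒫_n is the set of Pauli strings on n qubits and d = 2^n, and Π_4^{sym} = Σ_{ρ ∈ S_4} T_ρ on (ℂ^d)^{⊗4}, one has Tr[Q Π_4^{sym}] = 4(d+1)(d+2). -/
open Matrix BigOperators
open scoped Classical

/- ### Auxiliary machinery -/

/-- Integer (Gaussian integer) version of the Pauli matrices, for decidable computation. -/
def pauliZ : Fin 4 → Matrix (Fin 2) (Fin 2) GaussianInt
  | 0 => !![1, 0; 0, 1]
  | 1 => !![0, 1; 1, 0]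
  | 2 => !![0, -⟨0,1⟩; ⟨0,1⟩, 0]
  | 3 => !![1, 0; 0, -1]

/-- `Σ_{a} Tr[(pauli a)^{⊗4} T_ρ]` over Gaussian integers. -/
def gZ (ρ : Equiv.Perm (Fin 4)) : GaussianInt :=
  ∑ a : Fin 4, ∑ x : Fin 4 → Fin 2, ∏ i, pauliZ a (x i) (x (ρ.symm i))

open Equiv in
/-- Explicit list of the 24 elements of `S₄`. -/
def permList : List (Equiv.Perm (Fin 4)) :=
  [1, c[0,1], c[0,2], c[0,3], c[1,2], c[1,3], c[2,3],
   c[0,1,2], c[0,2,1], c[0,1,3], c[0,3,1], c[0,2,3], c[0,3,2], c[1,2,3], c[1,3,2],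
   c[0,1]*c[2,3], c[0,2]*c[1,3], c[0,3]*c[1,2],
   c[0,1,2,3], c[0,1,3,2], c[0,2,1,3], c[0,2,3,1], c[0,3,1,2], c[0,3,2,1]]

set_option maxHeartbeats 1000000 in
lemma univ_perm_eq : (Finset.univ : Finset (Equiv.Perm (Fin 4))) = permList.toFinset := by
  decide

set_option maxHeartbeats 1000000 in
lemma permList_nodup : permList.Nodup := by decide

set_option maxHeartbeats 1000000 in
lemma gZ_values :
    permList.map gZ = [16,8,8,8,8,8,8,4,4,4,4,4,4,4,4,16,16,16,8,8,8,8,8,8] := by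
  decide

lemma pauliZ_toComplex (a : Fin 4) (i j : Fin 2) :
    GaussianInt.toComplex (pauliZ a i j) = pauli a i j := by
  fin_cases a <;> fin_cases i <;> fin_cases j <;>
    simp [pauli, pauliZ, GaussianInt.toComplex_def, Matrix.one_apply, Complex.ext_iff]

lemma gC_eq (ρ : Equiv.Perm (Fin 4)) :
    (∑ a : Fin 4, ∑ x : Fin 4 → Fin 2, ∏ i, pauli a (x i) (x (ρ.symm i)))
      = GaussianInt.toComplex (gZ ρ) := by
  simp [gZ, map_sum, map_prod, pauliZ_toComplex]

lemma trace_term (n : ℕ) (s : Fin n → Fin 4) (ρ : Equiv.Perm (Fin 4)) :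
    (tensorPow (pauliString s) 4 * permOp (Fin n → Fin 2) ρ).trace
      = ∏ j : Fin n, ∑ x : Fin 4 → Fin 2, ∏ i : Fin 4, pauli (s j) (x i) (x (ρ.symm i)) := by
  rw [Fintype.prod_sum (fun j (x : Fin 4 → Fin 2) => ∏ i, pauli (s j) (x i) (x (ρ.symm i)))]
  have step1 : (tensorPow (pauliString s) 4 * permOp (Fin n → Fin 2) ρ).trace
      = ∑ X : Fin 4 → (Fin n → Fin 2), ∏ i, ∏ j, pauli (s j) (X i j) (X (ρ.symm i) j) := by
    simp only [Matrix.trace, Matrix.diag, Matrix.mul_apply, permOp, mul_ite, mul_one, mul_zero,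
      Finset.sum_ite_eq', Finset.mem_univ, if_true, tensorPow, pauliString]
    rfl
  rw [step1]
  exact Fintype.sum_equiv (Equiv.piComm (fun (_ : Fin 4) (_ : Fin n) => Fin 2))
    _ _ (fun X => Finset.prod_comm)

lemma sum_gC_pow (n : ℕ) :
    ∑ ρ : Equiv.Perm (Fin 4), (GaussianInt.toComplex (gZ ρ)) ^ n
      = 4 * 16 ^ n + 12 * 8 ^ n + 8 * 4 ^ n := by
  rw [univ_perm_eq, List.sum_toFinset _ permList_nodup]
  have : permList.map (fun ρ => (GaussianInt.toComplex (gZ ρ)) ^ n)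
      = (permList.map gZ).map (fun z => (GaussianInt.toComplex z) ^ n) := by
    rw [List.map_map]
    rfl
  rw [this, gZ_values]
  simp only [List.map_cons, List.map_nil, List.sum_cons, List.sum_nil]
  have h16 : GaussianInt.toComplex 16 = 16 := by simp [GaussianInt.toComplex_def]
  have h8 : GaussianInt.toComplex 8 = 8 := by simp [GaussianInt.toComplex_def]
  have h4 : GaussianInt.toComplex 4 = 4 := by simp [GaussianInt.toComplex_def]
  rw [h16, h8, h4]
  ring

/-- `Tr[Q Π_4^{sym}] = 4(d+1)(d+2)` with `d = 2^n`. -/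
theorem trace_Qop_symProj (n : ℕ) :
    (Qop n * symProj (Fin n → Fin 2) 4).trace =
      4 * ((2 : ℂ) ^ n + 1) * ((2 : ℂ) ^ n + 2) := by
  have key : (Qop n * symProj (Fin n → Fin 2) 4).trace
      = (((2 : ℂ) ^ n) ^ 2)⁻¹ *
        ∑ ρ : Equiv.Perm (Fin 4), ∑ s : Fin n → Fin 4,
          (tensorPow (pauliString s) 4 * permOp (Fin n → Fin 2) ρ).trace := by
    rw [Qop, symProj, Matrix.smul_mul, Matrix.trace_smul, smul_eq_mul]
    congr 1
    rw [Matrix.sum_mul, Matrix.trace_sum, Finset.sum_comm]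
    exact Finset.sum_congr rfl fun ρ _ => by rw [Matrix.mul_sum, Matrix.trace_sum]
  rw [key]
  have inner : ∀ ρ : Equiv.Perm (Fin 4),
      (∑ s : Fin n → Fin 4,
        (tensorPow (pauliString s) 4 * permOp (Fin n → Fin 2) ρ).trace)
      = (GaussianInt.toComplex (gZ ρ)) ^ n := by
    intro ρ
    rw [← gC_eq ρ, Fintype.sum_pow (fun a => ∑ x : Fin 4 → Fin 2,
      ∏ i, pauli a (x i) (x (ρ.symm i))) n]
    exact Finset.sum_congr rfl fun s _ => trace_term n s ρ
  rw [Finset.sum_congr rfl fun ρ _ => inner ρ, sum_gC_pow]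
  have h2 : ((2 : ℂ) ^ n) ≠ 0 := pow_ne_zero _ two_ne_zero
  have e16 : (16 : ℂ) ^ n = ((2 : ℂ) ^ n) ^ 4 := by
    rw [show (16 : ℂ) = 2 ^ 4 by norm_num, ← pow_mul, ← pow_mul, mul_comm]
  have e8 : (8 : ℂ) ^ n = ((2 : ℂ) ^ n) ^ 3 := by
    rw [show (8 : ℂ) = 2 ^ 3 by norm_num, ← pow_mul, ← pow_mul, mul_comm]
  have e4 : (4 : ℂ) ^ n = ((2 : ℂ) ^ n) ^ 2 := by
    rw [show (4 : ℂ) = 2 ^ 2 by norm_num, ← pow_mul, ← pow_mul, mul_comm]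
  rw [e16, e8, e4]
  field_simp
  ring
end

section
/- For distinct computational basis bit strings i ≠ j of length m, Σ_{ρ ∈ S_4} Tr[T_ρ^A] ⟨iijj| T_ρ^B |iijj⟩ = Tr[Π_2^{sym,A}]² = d_A²(d_A+1)², where T_ρ = T_ρ^A ⊗ T_ρ^B is the factorization of the permutation operator on ((ℂ^{d_A}) ⊗ (ℂ^{d_B}))^{⊗4}. -/
open Matrix BigOperators
open scoped Classical

/-!
Since `i ≠ j`, the diagonal entry `⟨iijj| T_ρ^B |iijj⟩` is `1` exactly when `ρ` lies in the
subgroup `S_2 × S_2 ≤ S_4` permuting the slots `{0, 1}` and `{2, 3}` separately, and `0`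
otherwise. On this subgroup `Tr[T_ρ^A]` is multiplicative (a basis tuple fixed by `σ × τ` is the
concatenation of tuples fixed by `σ` and by `τ`), so the sum factorizes as
`(Σ_{σ ∈ S_2} Tr[T_σ^A])² = Tr[Π_2^{sym,A}]²`, and `Tr[Π_2^{sym,A}] = d_A² + d_A`.
-/

/-- `S_m × S_n ≤ S_{m+n}`: `σ` permutes the first `m` tensor factors and `τ` the last `n`. -/
def permAppend {m n : ℕ} (σ : Equiv.Perm (Fin m)) (τ : Equiv.Perm (Fin n)) :
    Equiv.Perm (Fin (m + n)) :=
  finSumFinEquiv.permCongr (σ.sumCongr τ)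

theorem permAppend_injective {m n : ℕ} :
    Function.Injective fun p : Equiv.Perm (Fin m) × Equiv.Perm (Fin n) => permAppend p.1 p.2 :=
  finSumFinEquiv.permCongr.injective.comp Equiv.Perm.sumCongrHom_injective

theorem append_comp_permAppend_symm {α : Type} {m n : ℕ} (a : Fin m → α) (b : Fin n → α)
    (σ : Equiv.Perm (Fin m)) (τ : Equiv.Perm (Fin n)) :
    Fin.append a b ∘ (permAppend σ τ).symm = Fin.append (a ∘ σ.symm) (b ∘ τ.symm) := by
  funext x
  refine Fin.addCases (fun i => ?_) (fun i => ?_) x <;> simp [permAppend, Equiv.permCongr_def]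

theorem iijj_eq_comp_symm_iff {ι : Type} {i j : ι} (hij : i ≠ j) (ρ : Equiv.Perm (Fin 4)) :
    ![i, i, j, j] = ![i, i, j, j] ∘ ρ.symm ↔ ∃ σ τ : Equiv.Perm (Fin 2), permAppend σ τ = ρ := by
  have hij' : Function.Injective ![i, j] := by
    intro p q
    fin_cases p <;> fin_cases q <;> simp [hij, hij.symm]
  -- `![i, j]` is injective, so the stabilizer does not depend on `i`, `j` and is a finite check.
  have h0011 : ∀ π : Equiv.Perm (Fin 4),
      (![0, 0, 1, 1] : Fin 4 → Fin 2) = ![0, 0, 1, 1] ∘ π.symm ↔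
        ∃ σ τ : Equiv.Perm (Fin 2), permAppend σ τ = π := by
    decide
  have hfactor : ![i, i, j, j] = ![i, j] ∘ (![0, 0, 1, 1] : Fin 4 → Fin 2) := by
    funext t
    fin_cases t <;> rfl
  rw [← h0011, hfactor, Function.comp_assoc, hij'.comp_left.eq_iff]

section PermOp

variable {ι : Type} [Fintype ι]

theorem trace_permOp {k : ℕ} (ρ : Equiv.Perm (Fin k)) :
    (permOp ι ρ).trace = Fintype.card {x : Fin k → ι // x = x ∘ ρ.symm} := by
  simp [Matrix.trace, permOp, Finset.sum_boole, Fintype.card_subtype]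

theorem trace_permOp_one (k : ℕ) :
    (permOp ι (1 : Equiv.Perm (Fin k))).trace = (Fintype.card ι : ℂ) ^ k := by
  simp [trace_permOp, ← Equiv.Perm.inv_def]

theorem trace_permOp_swap_zero_one :
    (permOp ι (Equiv.swap (0 : Fin 2) 1)).trace = Fintype.card ι := by
  rw [trace_permOp]
  congr 1
  refine Fintype.card_congr ⟨fun x => x.1 0, fun a => ⟨fun _ => a, rfl⟩, fun x => ?_, fun a => rfl⟩
  obtain ⟨x, hx⟩ := x
  ext k
  fin_cases k
  · rfl
  · simpa using congrFun hx 0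

theorem trace_symProj_two :
    (symProj ι 2).trace = (Fintype.card ι : ℂ) ^ 2 + Fintype.card ι := by
  rw [symProj, Matrix.trace_sum, show (Finset.univ : Finset (Equiv.Perm (Fin 2))) =
    {1, Equiv.swap 0 1} from by decide, Finset.sum_pair (by decide), trace_permOp_one,
    trace_permOp_swap_zero_one]

theorem trace_permOp_permAppend {m n : ℕ} (σ : Equiv.Perm (Fin m)) (τ : Equiv.Perm (Fin n)) :
    (permOp ι (permAppend σ τ)).trace = (permOp ι σ).trace * (permOp ι τ).trace := by
  simp only [trace_permOp]
  rw [← Nat.cast_mul, ← Fintype.card_prod]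
  congr 1
  refine Fintype.card_congr ((Equiv.subtypeEquiv (Fin.appendEquiv m n) fun p => ?_).symm.trans
    Equiv.subtypeProdEquivProd)
  have h : Fin.appendEquiv m n p ∘ (permAppend σ τ).symm =
      Fin.appendEquiv m n (p.1 ∘ σ.symm, p.2 ∘ τ.symm) :=
    append_comp_permAppend_symm p.1 p.2 σ τ
  rw [h, (Fin.appendEquiv m n).injective.eq_iff, Prod.ext_iff]

theorem sum_trace_permOp_permAppend (m n : ℕ) :
    ∑ p : Equiv.Perm (Fin m) × Equiv.Perm (Fin n), (permOp ι (permAppend p.1 p.2)).trace =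
      (symProj ι m).trace * (symProj ι n).trace := by
  simp only [trace_permOp_permAppend, Fintype.sum_prod_type, symProj, Matrix.trace_sum,
    Finset.sum_mul_sum]

theorem sum_mul_permOp_apply_self {k : ℕ} (f : Equiv.Perm (Fin k) → ℂ) (x : Fin k → ι) :
    ∑ ρ, f ρ * permOp ι ρ x x = ∑ ρ ∈ Finset.univ.filter (fun ρ => x = x ∘ ρ.symm), f ρ := by
  simp [permOp, Finset.sum_filter]

end PermOp

/-- for `i ≠ j`,
`Σ_{ρ ∈ S_4} Tr[T_ρ^A] ⟨iijj|T_ρ^B|iijj⟩ = Tr[Π_2^{sym,A}]² = d_A²(d_A+1)²`. -/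
theorem sum_trace_permOp_iijj {ιA ιB : Type} [Fintype ιA] [Fintype ιB]
    (i j : ιB) (hij : i ≠ j) :
    (∑ ρ : Equiv.Perm (Fin 4),
        (permOp ιA ρ).trace * permOp ιB ρ ![i, i, j, j] ![i, i, j, j])
      = ((symProj ιA 2).trace) ^ 2 ∧
    (∑ ρ : Equiv.Perm (Fin 4),
        (permOp ιA ρ).trace * permOp ιB ρ ![i, i, j, j] ![i, i, j, j])
      = (Fintype.card ιA : ℂ) ^ 2 * ((Fintype.card ιA : ℂ) + 1) ^ 2 := by
  have hstab : Finset.univ.filter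
        (fun ρ : Equiv.Perm (Fin 4) => ![i, i, j, j] = ![i, i, j, j] ∘ ρ.symm) =
      Finset.univ.image fun p : Equiv.Perm (Fin 2) × Equiv.Perm (Fin 2) => permAppend p.1 p.2 := by
    ext ρ
    simp [iijj_eq_comp_symm_iff hij]
  have hsum : (∑ ρ : Equiv.Perm (Fin 4),
      (permOp ιA ρ).trace * permOp ιB ρ ![i, i, j, j] ![i, i, j, j]) =
        (symProj ιA 2).trace ^ 2 := by
    rw [sum_mul_permOp_apply_self, hstab, Finset.sum_image permAppend_injective.injOn,
      sum_trace_permOp_permAppend, sq]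
  refine ⟨hsum, ?_⟩
  rw [hsum, trace_symProj_two]
  ring
end

section
/- With S_A = T_{(13)(24)}^A on H_A^{⊗4} (dim H_A = d_A) and Q_A = (1/d_A²) Σ_{P ∈ 𝒫_{N_A}} P^{⊗4}, one has Σ_{ρ ∈ ⟨(1324),(12)⟩} Tr[S_A Q_A T_ρ^A] = 4 d_A (d_A + 1). -/
open Matrix BigOperators
open scoped Classical

variable {ι : Type} [Fintype ι]

lemma trace_tpow_permOp (O : Matrix ι ι ℂ) (τ : Equiv.Perm (Fin 4)) :
    (tensorPow O 4 * permOp ι τ).trace = ∑ x : Fin 4 → ι, ∏ i, O (x i) (x (τ.symm i)) := by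
  simp only [Matrix.trace, Matrix.diag, Matrix.mul_apply, permOp, tensorPow,
    mul_ite, mul_one, mul_zero]
  refine Finset.sum_congr rfl fun x _ => ?_
  rw [Finset.sum_ite_eq' Finset.univ (x ∘ τ.symm)]
  simp [Function.comp]

def e4 {ι : Type} [Fintype ι] : (ι × ι × ι × ι) ≃ (Fin 4 → ι) where
  toFun p := ![p.1, p.2.1, p.2.2.1, p.2.2.2]
  invFun x := (x 0, x 1, x 2, x 3)
  left_inv p := rfl
  right_inv x := by funext i; fin_cases i <;> rfl

lemma sum_pi4 (g : ι → ι → ι → ι → ℂ) :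
    (∑ x : Fin 4 → ι, g (x 0) (x 1) (x 2) (x 3)) = ∑ a, ∑ b, ∑ c, ∑ d, g a b c d := by
  rw [← Fintype.sum_equiv (e4 (ι := ι)) _ (fun x => g (x 0) (x 1) (x 2) (x 3)) (fun p => rfl)]
  rw [Fintype.sum_prod_type]
  refine Finset.sum_congr rfl fun a _ => ?_
  rw [Fintype.sum_prod_type]
  refine Finset.sum_congr rfl fun b _ => ?_
  rw [Fintype.sum_prod_type]
  rfl

lemma sum_perm4 (g : (Fin 4 → ι) → ℂ) (π : Equiv.Perm (Fin 4)) :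
    (∑ x : Fin 4 → ι, g (x ∘ π)) = ∑ x : Fin 4 → ι, g x :=
  Fintype.sum_equiv (Equiv.arrowCongr π.symm (Equiv.refl ι)) _ _ (fun x => rfl)

noncomputable def chain4 (O : Matrix ι ι ℂ) (x : Fin 4 → ι) : ℂ :=
  O (x 0) (x 1) * (O (x 1) (x 2) * (O (x 2) (x 3) * O (x 3) (x 0)))
noncomputable def pair2 (O : Matrix ι ι ℂ) (x : Fin 4 → ι) : ℂ :=
  (O (x 0) (x 1) * O (x 1) (x 0)) * (O (x 2) (x 3) * O (x 3) (x 2))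
noncomputable def pair21 (O : Matrix ι ι ℂ) (x : Fin 4 → ι) : ℂ :=
  (O (x 0) (x 1) * O (x 1) (x 0)) * (O (x 2) (x 2) * O (x 3) (x 3))
noncomputable def diag4 (O : Matrix ι ι ℂ) (x : Fin 4 → ι) : ℂ :=
  O (x 0) (x 0) * O (x 1) (x 1) * (O (x 2) (x 2) * O (x 3) (x 3))

lemma key (O : Matrix ι ι ℂ) (τ π : Equiv.Perm (Fin 4)) (F : Matrix ι ι ℂ → (Fin 4 → ι) → ℂ)
    (h : ∀ x : Fin 4 → ι, (∏ i, O (x i) (x (τ.symm i))) = F O (x ∘ π)) :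
    (tensorPow O 4 * permOp ι τ).trace = ∑ x : Fin 4 → ι, F O x := by
  rw [trace_tpow_permOp, Finset.sum_congr rfl (fun x _ => h x)]
  exact sum_perm4 _ π

lemma sum_diag4 (O : Matrix ι ι ℂ) :
    (∑ x : Fin 4 → ι, diag4 O x) = (∑ a, O a a) ^ 4 := by
  simp only [diag4]
  rw [sum_pi4 (fun a b c d => O a a * O b b * (O c c * O d d))]
  simp only [pow_succ, pow_zero, one_mul, Finset.sum_mul, Finset.mul_sum]
  refine Finset.sum_congr rfl fun a _ => Finset.sum_congr rfl fun b _ =>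
    Finset.sum_congr rfl fun c _ => Finset.sum_congr rfl fun d _ => by ring

lemma sum_pair2 (O : Matrix ι ι ℂ) :
    (∑ x : Fin 4 → ι, pair2 O x) = (∑ a, ∑ b, O a b * O b a) ^ 2 := by
  simp only [pair2]
  rw [sum_pi4 (fun a b c d => (O a b * O b a) * (O c d * O d c))]
  simp only [pow_succ, pow_zero, one_mul, Finset.sum_mul, Finset.mul_sum]
  refine Finset.sum_congr rfl fun a _ => Finset.sum_congr rfl fun b _ =>
    Finset.sum_congr rfl fun c _ => Finset.sum_congr rfl fun d _ => by ring

lemma sum_pair21 (O : Matrix ι ι ℂ) :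
    (∑ x : Fin 4 → ι, pair21 O x) = (∑ a, O a a) ^ 2 * (∑ a, ∑ b, O a b * O b a) := by
  simp only [pair21]
  rw [sum_pi4 (fun a b c d => (O a b * O b a) * (O c c * O d d))]
  simp only [pow_succ, pow_zero, one_mul, Finset.sum_mul, Finset.mul_sum]
  refine Finset.sum_congr rfl fun a _ => Finset.sum_congr rfl fun b _ =>
    Finset.sum_congr rfl fun c _ => Finset.sum_congr rfl fun d _ => by ring

lemma sum_chain4 (O : Matrix ι ι ℂ) :
    (∑ x : Fin 4 → ι, chain4 O x) = ∑ a, ∑ b, ∑ c, ∑ d, O a b * (O b c * (O c d * O d a)) := by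
  simp only [chain4]
  exact sum_pi4 (fun a b c d => O a b * (O b c * (O c d * O d a)))

abbrev aP : Equiv.Perm (Fin 4) := c[(0 : Fin 4), 2, 1, 3]
abbrev bP : Equiv.Perm (Fin 4) := Equiv.swap (0 : Fin 4) 1

lemma tr_one (O : Matrix ι ι ℂ) :
    (tensorPow O 4 * permOp ι (1 : Equiv.Perm (Fin 4))).trace = ∑ x : Fin 4 → ι, diag4 O x := by
  refine key O (1 : Equiv.Perm (Fin 4)) 1 diag4 (fun x => ?_)
  rw [Fin.prod_univ_four]
  simp only [diag4, Function.comp_apply,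
    show ((1 : Equiv.Perm (Fin 4))).symm 0 = 0 from by decide,
    show ((1 : Equiv.Perm (Fin 4))).symm 1 = 1 from by decide,
    show ((1 : Equiv.Perm (Fin 4))).symm 2 = 2 from by decide,
    show ((1 : Equiv.Perm (Fin 4))).symm 3 = 3 from by decide,
    show (1 : Equiv.Perm (Fin 4)) 0 = 0 from by decide,
    show (1 : Equiv.Perm (Fin 4)) 1 = 1 from by decide,
    show (1 : Equiv.Perm (Fin 4)) 2 = 2 from by decide,
    show (1 : Equiv.Perm (Fin 4)) 3 = 3 from by decide]
  ring

lemma tr_a (O : Matrix ι ι ℂ) :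
    (tensorPow O 4 * permOp ι aP).trace = ∑ x : Fin 4 → ι, chain4 O x := by
  refine key O aP (c[(1:Fin 4),3,2]) chain4 (fun x => ?_)
  rw [Fin.prod_univ_four]
  simp only [chain4, Function.comp_apply,
    show (aP).symm 0 = 3 from by decide,
    show (aP).symm 1 = 2 from by decide,
    show (aP).symm 2 = 0 from by decide,
    show (aP).symm 3 = 1 from by decide,
    show ((c[(1:Fin 4),3,2]) : Equiv.Perm (Fin 4)) 0 = 0 from by decide,
    show ((c[(1:Fin 4),3,2]) : Equiv.Perm (Fin 4)) 1 = 3 from by decide,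
    show ((c[(1:Fin 4),3,2]) : Equiv.Perm (Fin 4)) 2 = 1 from by decide,
    show ((c[(1:Fin 4),3,2]) : Equiv.Perm (Fin 4)) 3 = 2 from by decide]
  ring

lemma tr_a2 (O : Matrix ι ι ℂ) :
    (tensorPow O 4 * permOp ι (aP*aP)).trace = ∑ x : Fin 4 → ι, pair2 O x := by
  refine key O (aP*aP) 1 pair2 (fun x => ?_)
  rw [Fin.prod_univ_four]
  simp only [pair2, Function.comp_apply,
    show ((aP*aP)).symm 0 = 1 from by decide,
    show ((aP*aP)).symm 1 = 0 from by decide,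
    show ((aP*aP)).symm 2 = 3 from by decide,
    show ((aP*aP)).symm 3 = 2 from by decide,
    show (1 : Equiv.Perm (Fin 4)) 0 = 0 from by decide,
    show (1 : Equiv.Perm (Fin 4)) 1 = 1 from by decide,
    show (1 : Equiv.Perm (Fin 4)) 2 = 2 from by decide,
    show (1 : Equiv.Perm (Fin 4)) 3 = 3 from by decide]
  ring

lemma tr_a3 (O : Matrix ι ι ℂ) :
    (tensorPow O 4 * permOp ι (aP*aP*aP)).trace = ∑ x : Fin 4 → ι, chain4 O x := by
  refine key O (aP*aP*aP) (Equiv.swap (1:Fin 4) 2) chain4 (fun x => ?_)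
  rw [Fin.prod_univ_four]
  simp only [chain4, Function.comp_apply,
    show ((aP*aP*aP)).symm 0 = 2 from by decide,
    show ((aP*aP*aP)).symm 1 = 3 from by decide,
    show ((aP*aP*aP)).symm 2 = 1 from by decide,
    show ((aP*aP*aP)).symm 3 = 0 from by decide,
    show ((Equiv.swap (1:Fin 4) 2) : Equiv.Perm (Fin 4)) 0 = 0 from by decide,
    show ((Equiv.swap (1:Fin 4) 2) : Equiv.Perm (Fin 4)) 1 = 2 from by decide,
    show ((Equiv.swap (1:Fin 4) 2) : Equiv.Perm (Fin 4)) 2 = 1 from by decide,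
    show ((Equiv.swap (1:Fin 4) 2) : Equiv.Perm (Fin 4)) 3 = 3 from by decide]
  ring

lemma tr_b (O : Matrix ι ι ℂ) :
    (tensorPow O 4 * permOp ι bP).trace = ∑ x : Fin 4 → ι, pair21 O x := by
  refine key O bP 1 pair21 (fun x => ?_)
  rw [Fin.prod_univ_four]
  simp only [pair21, Function.comp_apply,
    show (bP).symm 0 = 1 from by decide,
    show (bP).symm 1 = 0 from by decide,
    show (bP).symm 2 = 2 from by decide,
    show (bP).symm 3 = 3 from by decide,
    show (1 : Equiv.Perm (Fin 4)) 0 = 0 from by decide,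
    show (1 : Equiv.Perm (Fin 4)) 1 = 1 from by decide,
    show (1 : Equiv.Perm (Fin 4)) 2 = 2 from by decide,
    show (1 : Equiv.Perm (Fin 4)) 3 = 3 from by decide]
  ring

lemma tr_ab (O : Matrix ι ι ℂ) :
    (tensorPow O 4 * permOp ι (aP*bP)).trace = ∑ x : Fin 4 → ι, pair2 O x := by
  refine key O (aP*bP) (c[(1:Fin 4),3,2]) pair2 (fun x => ?_)
  rw [Fin.prod_univ_four]
  simp only [pair2, Function.comp_apply,
    show ((aP*bP)).symm 0 = 3 from by decide,
    show ((aP*bP)).symm 1 = 2 from by decide,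
    show ((aP*bP)).symm 2 = 1 from by decide,
    show ((aP*bP)).symm 3 = 0 from by decide,
    show ((c[(1:Fin 4),3,2]) : Equiv.Perm (Fin 4)) 0 = 0 from by decide,
    show ((c[(1:Fin 4),3,2]) : Equiv.Perm (Fin 4)) 1 = 3 from by decide,
    show ((c[(1:Fin 4),3,2]) : Equiv.Perm (Fin 4)) 2 = 1 from by decide,
    show ((c[(1:Fin 4),3,2]) : Equiv.Perm (Fin 4)) 3 = 2 from by decide]
  ring

lemma tr_a2b (O : Matrix ι ι ℂ) :
    (tensorPow O 4 * permOp ι (aP*aP*bP)).trace = ∑ x : Fin 4 → ι, pair21 O x := by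
  refine key O (aP*aP*bP) (Equiv.swap (0:Fin 4) 2 * Equiv.swap (1:Fin 4) 3) pair21 (fun x => ?_)
  rw [Fin.prod_univ_four]
  simp only [pair21, Function.comp_apply,
    show ((aP*aP*bP)).symm 0 = 0 from by decide,
    show ((aP*aP*bP)).symm 1 = 1 from by decide,
    show ((aP*aP*bP)).symm 2 = 3 from by decide,
    show ((aP*aP*bP)).symm 3 = 2 from by decide,
    show ((Equiv.swap (0:Fin 4) 2 * Equiv.swap (1:Fin 4) 3) : Equiv.Perm (Fin 4)) 0 = 2 from by decide,
    show ((Equiv.swap (0:Fin 4) 2 * Equiv.swap (1:Fin 4) 3) : Equiv.Perm (Fin 4)) 1 = 3 from by decide,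
    show ((Equiv.swap (0:Fin 4) 2 * Equiv.swap (1:Fin 4) 3) : Equiv.Perm (Fin 4)) 2 = 0 from by decide,
    show ((Equiv.swap (0:Fin 4) 2 * Equiv.swap (1:Fin 4) 3) : Equiv.Perm (Fin 4)) 3 = 1 from by decide]
  ring

lemma tr_a3b (O : Matrix ι ι ℂ) :
    (tensorPow O 4 * permOp ι (aP*aP*aP*bP)).trace = ∑ x : Fin 4 → ι, pair2 O x := by
  refine key O (aP*aP*aP*bP) (Equiv.swap (1:Fin 4) 2) pair2 (fun x => ?_)
  rw [Fin.prod_univ_four]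
  simp only [pair2, Function.comp_apply,
    show ((aP*aP*aP*bP)).symm 0 = 2 from by decide,
    show ((aP*aP*aP*bP)).symm 1 = 3 from by decide,
    show ((aP*aP*aP*bP)).symm 2 = 0 from by decide,
    show ((aP*aP*aP*bP)).symm 3 = 1 from by decide,
    show ((Equiv.swap (1:Fin 4) 2) : Equiv.Perm (Fin 4)) 0 = 0 from by decide,
    show ((Equiv.swap (1:Fin 4) 2) : Equiv.Perm (Fin 4)) 1 = 2 from by decide,
    show ((Equiv.swap (1:Fin 4) 2) : Equiv.Perm (Fin 4)) 2 = 1 from by decide,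
    show ((Equiv.swap (1:Fin 4) 2) : Equiv.Perm (Fin 4)) 3 = 3 from by decide]
  ring

lemma pauli_sq (k : Fin 4) : pauli k * pauli k = 1 := by
  fin_cases k <;>
    · ext i j
      fin_cases i <;> fin_cases j <;>
        simp [pauli, Matrix.mul_apply, Fin.sum_univ_two, Matrix.one_apply, Complex.I_mul_I] <;>
        ring_nf <;> simp [Complex.I_sq]

lemma pauliString_mul_self {n : ℕ} (s : Fin n → Fin 4) :
    pauliString s * pauliString s = 1 := by
  ext x y
  rw [Matrix.mul_apply]
  have : ∀ z : Fin n → Fin 2,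
      pauliString s x z * pauliString s z y = ∏ i, pauli (s i) (x i) (z i) * pauli (s i) (z i) (y i) := by
    intro z; rw [pauliString, pauliString, ← Finset.prod_mul_distrib]
  simp_rw [this]
  rw [← Fintype.piFinset_univ, ← Finset.prod_univ_sum (fun _ => (Finset.univ : Finset (Fin 2)))
    (fun i u => pauli (s i) (x i) u * pauli (s i) u (y i))]
  have : ∀ i : Fin n, (∑ u : Fin 2, pauli (s i) (x i) u * pauli (s i) u (y i))
      = (1 : Matrix (Fin 2) (Fin 2) ℂ) (x i) (y i) := by
    intro i; rw [← Matrix.mul_apply, pauli_sq]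
  simp_rw [this, Matrix.one_apply]
  by_cases h : x = y
  · simp [h]
  · obtain ⟨i, hi⟩ := Function.ne_iff.mp h
    rw [Finset.prod_eq_zero (Finset.mem_univ i) (by simp [hi]), if_neg h]

lemma pauli_trace_vals :
    (∑ u : Fin 2, pauli 0 u u) = 2 ∧ (∑ u : Fin 2, pauli 1 u u) = 0 ∧
    (∑ u : Fin 2, pauli 2 u u) = 0 ∧ (∑ u : Fin 2, pauli 3 u u) = 0 := by
  refine ⟨?_, ?_, ?_, ?_⟩ <;> simp [pauli, Fin.sum_univ_two, Matrix.one_apply]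

lemma A1P {n : ℕ} (s : Fin n → Fin 4) :
    (∑ a : Fin n → Fin 2, pauliString s a a) = ∏ i, (∑ u : Fin 2, pauli (s i) u u) := by
  rw [Finset.prod_univ_sum]
  rfl

lemma A2P {n : ℕ} (s : Fin n → Fin 4) :
    (∑ a : Fin n → Fin 2, ∑ b, pauliString s a b * pauliString s b a) = (2 : ℂ) ^ n := by
  have : ∀ a : Fin n → Fin 2, (∑ b, pauliString s a b * pauliString s b a)
      = (1 : Matrix (Fin n → Fin 2) (Fin n → Fin 2) ℂ) a a := by
    intro a; rw [← Matrix.mul_apply, pauliString_mul_self]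
  simp_rw [this, Matrix.one_apply_eq]
  simp [Finset.card_univ]

lemma C4P {n : ℕ} (s : Fin n → Fin 4) :
    (∑ a : Fin n → Fin 2, ∑ b, ∑ c, ∑ d,
      pauliString s a b * (pauliString s b c * (pauliString s c d * pauliString s d a)))
      = (2 : ℂ) ^ n := by
  set P := pauliString s with hP
  have h1 : ∀ a c : Fin n → Fin 2, (∑ d, P c d * P d a)
      = (1 : Matrix (Fin n → Fin 2) (Fin n → Fin 2) ℂ) c a := by
    intro a c; rw [← Matrix.mul_apply, hP, pauliString_mul_self]
  simp_rw [← Finset.mul_sum]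
  simp_rw [h1]
  simp_rw [Matrix.one_apply]
  simp_rw [mul_ite, mul_one, mul_zero]
  simp_rw [Finset.sum_ite_eq', Finset.mem_univ, if_true]
  have h2 : ∀ a : Fin n → Fin 2, (∑ b, P a b * P b a)
      = (1 : Matrix (Fin n → Fin 2) (Fin n → Fin 2) ℂ) a a := by
    intro a; rw [← Matrix.mul_apply, hP, pauliString_mul_self]
  simp_rw [h2, Matrix.one_apply_eq]
  simp [Finset.card_univ]

lemma permOp_mul {k : ℕ} (σ ρ : Equiv.Perm (Fin k)) :
    permOp ι σ * permOp ι ρ = permOp ι (σ * ρ) := by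
  ext x y
  simp only [permOp, Matrix.mul_apply, mul_ite, mul_one, mul_zero]
  rw [Finset.sum_ite_eq' Finset.univ (y ∘ ρ.symm)]
  simp only [Finset.mem_univ, if_true]
  congr 1



abbrev sP : Equiv.Perm (Fin 4) := Equiv.swap (0 : Fin 4) 2 * Equiv.swap (1 : Fin 4) 3

def SL : List (Equiv.Perm (Fin 4)) :=
  [1, aP, aP*aP, aP*aP*aP, bP, aP*bP, aP*aP*bP, aP*aP*aP*bP]

example : SL.Nodup := by decide
example : sP ∈ SL := by decide
example : ∀ x ∈ SL, ∀ y ∈ SL, x * y ∈ SL := by decide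

def SF : Finset (Equiv.Perm (Fin 4)) := SL.toFinset

def KG : Subgroup (Equiv.Perm (Fin 4)) where
  carrier := {x | x ∈ SF}
  one_mem' := by decide
  mul_mem' := by intro x y hx hy; revert hx hy; revert x y; decide
  inv_mem' := by intro x hx; revert hx; revert x; decide

lemma mem_iff (x : Equiv.Perm (Fin 4)) :
    x ∈ SF ↔ x ∈ Subgroup.closure ({aP, bP} : Set (Equiv.Perm (Fin 4))) := by
  constructor
  · intro hx
    have ha : aP ∈ Subgroup.closure ({aP, bP} : Set (Equiv.Perm (Fin 4))) :=
      Subgroup.subset_closure (by simp)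
    have hb : bP ∈ Subgroup.closure ({aP, bP} : Set (Equiv.Perm (Fin 4))) :=
      Subgroup.subset_closure (by simp)
    have hx' : x ∈ SL := List.mem_toFinset.mp hx
    simp only [SL, List.mem_cons, List.not_mem_nil, or_false] at hx'
    rcases hx' with h|h|h|h|h|h|h|h <;> subst h
    · exact one_mem _
    · exact ha
    · exact mul_mem ha ha
    · exact mul_mem (mul_mem ha ha) ha
    · exact hb
    · exact mul_mem ha hb
    · exact mul_mem (mul_mem ha ha) hb
    · exact mul_mem (mul_mem (mul_mem ha ha) ha) hb
  · intro hx
    have : Subgroup.closure ({aP, bP} : Set (Equiv.Perm (Fin 4))) ≤ KG := by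
      rw [Subgroup.closure_le]
      intro x hx
      rcases hx with h | h <;> subst h <;>
        · show _ ∈ SF; exact List.mem_toFinset.mpr (by decide)
    exact this hx



noncomputable def tP (k : Fin 4) : ℂ := ∑ u : Fin 2, pauli k u u

lemma sum_tP_pow4 : (∑ k : Fin 4, tP k ^ 4) = 16 := by
  obtain ⟨h0, h1, h2, h3⟩ := pauli_trace_vals
  rw [Fin.sum_univ_four]
  simp only [tP, h0, h1, h2, h3]
  norm_num

lemma sum_tP_pow2 : (∑ k : Fin 4, tP k ^ 2) = 4 := by
  obtain ⟨h0, h1, h2, h3⟩ := pauli_trace_vals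
  rw [Fin.sum_univ_four]
  simp only [tP, h0, h1, h2, h3]
  norm_num

lemma sum_s_pow (n : ℕ) (m : ℕ) (C : ℂ) (hC : (∑ k : Fin 4, tP k ^ m) = C) :
    (∑ s : Fin n → Fin 4, (∏ i, tP (s i)) ^ m) = C ^ n := by
  simp_rw [← Finset.prod_pow]
  rw [← Fintype.piFinset_univ,
    ← Finset.prod_univ_sum (fun _ => (Finset.univ : Finset (Fin 4))) (fun _ k => tP k ^ m)]
  simp [hC]

lemma card_s (n : ℕ) : (Fintype.card (Fin n → Fin 4) : ℂ) = 4 ^ n := by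
  simp [Fintype.card_fun]


/-- `Σ_{ρ ∈ ⟨(1324),(12)⟩} Tr[S_A Q_A T_ρ^A] = 4 d_A (d_A + 1)`,
with `d_A = 2^{N_A}` and `S_A = T_{(13)(24)}^A`. -/
theorem sum_trace_swapA_Qop (NA : ℕ) :
    (∑ ρ : (Subgroup.closure
        ({c[(0 : Fin 4), 2, 1, 3], Equiv.swap (0 : Fin 4) 1} :
          Set (Equiv.Perm (Fin 4)))),
      (permOp (Fin NA → Fin 2) (Equiv.swap (0 : Fin 4) 2 * Equiv.swap (1 : Fin 4) 3) *
        Qop NA * permOp (Fin NA → Fin 2) (ρ : Equiv.Perm (Fin 4))).trace)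
      = 4 * (2 : ℂ) ^ NA * ((2 : ℂ) ^ NA + 1) := by
  set ι := (Fin NA → Fin 2)
  set f : Equiv.Perm (Fin 4) → ℂ := fun ρ =>
    (permOp ι sP * Qop NA * permOp ι ρ).trace with hf
  rw [← Finset.sum_subtype SF mem_iff f]
  -- step 2: rewrite each term as trace (Qop * permOp (ρ * sP))
  have hstep2 : ∀ ρ : Equiv.Perm (Fin 4),
      f ρ = (Qop NA * permOp ι (ρ * sP)).trace := by
    intro ρ
    rw [hf]
    simp only
    rw [Matrix.trace_mul_comm, ← mul_assoc, permOp_mul, Matrix.trace_mul_comm]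
  simp_rw [hstep2]
  -- step 3: reindex ρ * sP over SF
  have hsP2 : sP * sP = 1 := by decide
  have hstep3 : (∑ ρ ∈ SF, (Qop NA * permOp ι (ρ * sP)).trace)
      = ∑ τ ∈ SF, (Qop NA * permOp ι τ).trace := by
    refine Finset.sum_nbij' (fun ρ => ρ * sP) (fun ρ => ρ * sP) ?_ ?_ ?_ ?_ ?_
    · intro a ha; revert ha; revert a; decide
    · intro a ha; revert ha; revert a; decide
    · intro a _; show a * sP * sP = a; rw [mul_assoc, hsP2, mul_one]
    · intro a _; show a * sP * sP = a; rw [mul_assoc, hsP2, mul_one]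
    · intro a _; rfl
  rw [hstep3]
  -- step 4: expand Qop
  have hQ : ∀ τ : Equiv.Perm (Fin 4), (Qop NA * permOp ι τ).trace
      = (((2 : ℂ) ^ NA) ^ 2)⁻¹ *
        ∑ s : Fin NA → Fin 4, (tensorPow (pauliString s) 4 * permOp ι τ).trace := by
    intro τ
    rw [Qop, smul_mul_assoc, Matrix.trace_smul, smul_eq_mul, Finset.sum_mul,
      Matrix.trace_sum]
  simp_rw [hQ, ← Finset.mul_sum]
  rw [Finset.sum_comm]
  -- step 5: evaluate inner sum over the 8 group elements for each s
  have hinner : ∀ s : Fin NA → Fin 4,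
      (∑ τ ∈ SF, (tensorPow (pauliString s) 4 * permOp ι τ).trace)
      = (∏ i, tP (s i)) ^ 4 + 2 * (2 : ℂ) ^ NA + 3 * ((2 : ℂ) ^ NA) ^ 2
        + 2 * ((2 : ℂ) ^ NA) * (∏ i, tP (s i)) ^ 2 := by
    intro s
    rw [show SF = SL.toFinset from rfl, List.sum_toFinset _ (by decide)]
    simp only [SL, List.map_cons, List.map_nil, List.sum_cons, List.sum_nil, add_zero]
    rw [tr_one, tr_a, tr_a2, tr_a3, tr_b, tr_ab, tr_a2b, tr_a3b,
      sum_diag4, sum_chain4, sum_pair2, sum_pair21]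
    have hA1 : (∑ a : ι, pauliString s a a) = ∏ i, tP (s i) := A1P s
    have hA2 := A2P s
    have hC4 := C4P s
    rw [hA1, hA2, hC4]
    ring
  simp_rw [hinner]
  -- step 6: final evaluation
  rw [Finset.sum_add_distrib, Finset.sum_add_distrib, Finset.sum_add_distrib]
  rw [sum_s_pow NA 4 16 sum_tP_pow4]
  have h2' : (∑ s : Fin NA → Fin 4, 2 * ((2 : ℂ) ^ NA) * (∏ i, tP (s i)) ^ 2)
      = 2 * ((2 : ℂ) ^ NA) * (4 : ℂ) ^ NA := by
    rw [← Finset.mul_sum, sum_s_pow NA 2 4 sum_tP_pow2]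
  rw [h2']
  rw [Finset.sum_const, Finset.sum_const, Finset.card_univ, nsmul_eq_mul, nsmul_eq_mul,
    card_s]
  have hd : (2 : ℂ) ^ NA ≠ 0 := pow_ne_zero _ two_ne_zero
  have h16 : (16 : ℂ) ^ NA = ((2 : ℂ) ^ NA) ^ 4 := by
    rw [show (16 : ℂ) = 2 ^ 4 by norm_num, ← pow_mul, mul_comm, pow_mul]
  have h4 : (4 : ℂ) ^ NA = ((2 : ℂ) ^ NA) ^ 2 := by
    rw [show (4 : ℂ) = 2 ^ 2 by norm_num, ← pow_mul, mul_comm, pow_mul]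
  rw [h16, h4]
  field_simp
  ring
end
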